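/- arXiv:1703.01762 — 3 statements merged into one kernel-verified Lean document; each statement's English description precedes it below -/
import Mathlib

section
/- Let $K = \mathbb{C}[\sigma]/(\sigma^m)$ for $m \geq 1$. Define $\gamma_1 \circ \gamma_2 := (\gamma_1 + \gamma_2) \cdot (1 + \sigma \gamma_1 \gamma_2)^{-1}$ (note $1 + \sigma\gamma_1\gamma_2$ is a unit since $\sigma$ is nilpotent). Then $(K, \circ)$ is an abelian group with identity element $0$. -/
open Polynomial

/-!
Write `a ∘ b = (a + b) / (1 + σ a b)`, which for `σ = 1` is the addition law of `tanh`. Since `σ` is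
nilpotent every denominator `1 + σ x` is a unit, so the law is defined everywhere. Clearing
denominators, both `(a ∘ b) ∘ c` and `a ∘ (b ∘ c)` equal the symmetric expression
`(a + b + c + σ a b c) / (1 + σ (a b + a c + b c))`, which gives associativity.
-/

theorem isNilpotent_mk_X_span_X_pow {R : Type*} [CommRing R] (m : ℕ) :
    IsNilpotent (Ideal.Quotient.mk (Ideal.span {(X : R[X]) ^ m}) X) :=
  ⟨m, by rw [← map_pow, Ideal.Quotient.eq_zero_iff_mem]; exact Ideal.subset_span rfl⟩

section CuspidalMul

variable {R : Type*} [CommRing R]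

noncomputable def cuspidalMul (s a b : R) : R :=
  (a + b) * Ring.inverse (1 + s * a * b)

variable {s : R}

theorem isUnit_one_add_mul (hs : IsNilpotent s) (x : R) : IsUnit (1 + s * x) :=
  IsNilpotent.isUnit_one_add ((Commute.all s x).isNilpotent_mul_right hs)

theorem isUnit_one_add_mul_mul (hs : IsNilpotent s) (a b : R) : IsUnit (1 + s * a * b) := by
  rw [mul_assoc]
  exact isUnit_one_add_mul hs _

theorem cuspidalMul_mul_one_add (hs : IsNilpotent s) (a b : R) :
    cuspidalMul s a b * (1 + s * a * b) = a + b := by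
  rw [cuspidalMul, mul_assoc, Ring.inverse_mul_cancel _ (isUnit_one_add_mul_mul hs a b), mul_one]

theorem cuspidalMul_comm (s a b : R) : cuspidalMul s a b = cuspidalMul s b a := by
  rw [cuspidalMul, cuspidalMul, add_comm, mul_right_comm s a b]

theorem cuspidalMul_zero (s a : R) : cuspidalMul s a 0 = a := by
  simp [cuspidalMul]

theorem zero_cuspidalMul (s a : R) : cuspidalMul s 0 a = a := by
  simp [cuspidalMul]

theorem cuspidalMul_neg_self (s a : R) : cuspidalMul s a (-a) = 0 := by
  simp [cuspidalMul]

theorem cuspidalMul_cuspidalMul_mul (hs : IsNilpotent s) (a b c : R) :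
    cuspidalMul s (cuspidalMul s a b) c * (1 + s * (a * b + a * c + b * c)) =
      a + b + c + s * (a * b * c) := by
  linear_combination (1 + s * a * b) * cuspidalMul_mul_one_add hs (cuspidalMul s a b) c +
    (1 - s * cuspidalMul s (cuspidalMul s a b) c * c) * cuspidalMul_mul_one_add hs a b

theorem cuspidalMul_assoc (hs : IsNilpotent s) (a b c : R) :
    cuspidalMul s (cuspidalMul s a b) c = cuspidalMul s a (cuspidalMul s b c) := by
  apply (isUnit_one_add_mul hs (a * b + a * c + b * c)).mul_right_cancel
  rw [cuspidalMul_cuspidalMul_mul hs, cuspidalMul_comm s a,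
    show a * b + a * c + b * c = b * c + b * a + c * a by ring,
    cuspidalMul_cuspidalMul_mul hs]
  ring

end CuspidalMul

theorem cuspidal_group_law_abelian_group_general
    (m : ℕ)
    (σ : Polynomial ℂ ⧸ Ideal.span {(X : Polynomial ℂ) ^ m})
    (hσ : σ = Ideal.Quotient.mk (Ideal.span {(X : Polynomial ℂ) ^ m}) X)
    (op : (Polynomial ℂ ⧸ Ideal.span {(X : Polynomial ℂ) ^ m}) →
      (Polynomial ℂ ⧸ Ideal.span {(X : Polynomial ℂ) ^ m}) →
      (Polynomial ℂ ⧸ Ideal.span {(X : Polynomial ℂ) ^ m}))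
    (hop : ∀ γ₁ γ₂, op γ₁ γ₂ = (γ₁ + γ₂) * Ring.inverse (1 + σ * γ₁ * γ₂)) :
    (∀ γ₁ γ₂, IsUnit (1 + σ * γ₁ * γ₂)) ∧
    (∀ γ₁ γ₂, op γ₁ γ₂ = op γ₂ γ₁) ∧
    (∀ γ₁ γ₂ γ₃, op (op γ₁ γ₂) γ₃ = op γ₁ (op γ₂ γ₃)) ∧
    (∀ γ, op γ 0 = γ) ∧ (∀ γ, op 0 γ = γ) ∧
    (∀ γ, op γ (-γ) = 0) := by
  have hσ_nil : IsNilpotent σ := hσ ▸ isNilpotent_mk_X_span_X_pow m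
  obtain rfl : op = cuspidalMul σ := funext₂ hop
  exact ⟨isUnit_one_add_mul_mul hσ_nil, cuspidalMul_comm σ, cuspidalMul_assoc hσ_nil,
    cuspidalMul_zero σ, zero_cuspidalMul σ, cuspidalMul_neg_self σ⟩

/-- Let `K = ℂ[σ]/(σ^m)` for `m ≥ 1` and let `σ` denote the class of the variable.
The operation `γ₁ ∘ γ₂ := (γ₁ + γ₂) * (1 + σ γ₁ γ₂)⁻¹` (where `1 + σ γ₁ γ₂` is a unit
since `σ` is nilpotent) makes `K` into an abelian group with identity element `0`. -/
theorem cuspidal_group_law_abelian_group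
    (m : ℕ) (hm : 1 ≤ m)
    (σ : Polynomial ℂ ⧸ Ideal.span {(X : Polynomial ℂ) ^ m})
    (hσ : σ = Ideal.Quotient.mk (Ideal.span {(X : Polynomial ℂ) ^ m}) X)
    (op : (Polynomial ℂ ⧸ Ideal.span {(X : Polynomial ℂ) ^ m}) →
      (Polynomial ℂ ⧸ Ideal.span {(X : Polynomial ℂ) ^ m}) →
      (Polynomial ℂ ⧸ Ideal.span {(X : Polynomial ℂ) ^ m}))
    (hop : ∀ γ₁ γ₂, op γ₁ γ₂ = (γ₁ + γ₂) * Ring.inverse (1 + σ * γ₁ * γ₂)) :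
    (∀ γ₁ γ₂, IsUnit (1 + σ * γ₁ * γ₂)) ∧
    (∀ γ₁ γ₂, op γ₁ γ₂ = op γ₂ γ₁) ∧
    (∀ γ₁ γ₂ γ₃, op (op γ₁ γ₂) γ₃ = op γ₁ (op γ₂ γ₃)) ∧
    (∀ γ, op γ 0 = γ) ∧ (∀ γ, op 0 γ = γ) ∧
    (∀ γ, op γ (-γ) = 0) :=
  cuspidal_group_law_abelian_group_general m σ hσ op hop
end

section
/- More generally, for any commutative ring $R$ and any nilpotent element $s \in R$, the operation $a \circ b := (a+b)(1 + s\,ab)^{-1}$ makes $R$ into an abelian group with identity $0$ and inverse $a \mapsto -a$. -/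
/-!
Put `v = (1 + s a b)⁻¹`. Then `a ∘ b + c` and `1 + s (a ∘ b) c` are `a + b + c + s a b c` and
`1 + s (ab + bc + ca)`, each multiplied by `v`; as `v` is a unit it cancels, so `(a ∘ b) ∘ c` is
given by a formula symmetric in `a, b, c`, which together with commutativity gives associativity.
-/

theorem Ring.mul_mul_inverse_mul_cancel_right {M₀ : Type*} [CommMonoidWithZero M₀] {w : M₀}
    (hw : IsUnit w) (x y : M₀) : x * w * Ring.inverse (y * w) = x * Ring.inverse y := by
  rw [Ring.mul_inverse_rev, mul_assoc x, ← mul_assoc w, Ring.mul_inverse_cancel w hw, one_mul]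

theorem isUnit_one_add_mul_of_mem_jacobson_bot {R : Type*} [CommRing R] {s : R}
    (hs : s ∈ Ideal.jacobson ⊥) (x : R) : IsUnit (1 + s * x) := by
  rw [add_comm]
  exact Ideal.mem_jacobson_bot.mp hs x

theorem IsNilpotent.mem_jacobson_bot {R : Type*} [CommRing R] {s : R} (hs : IsNilpotent s) :
    s ∈ Ideal.jacobson ⊥ :=
  Ideal.radical_le_jacobson (mem_nilradical.mpr hs)

section TangentAdd

variable {R : Type*} [CommRing R] (s : R)

noncomputable def tangentAdd (a b : R) : R := (a + b) * Ring.inverse (1 + s * a * b)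

theorem tangentAdd_comm (a b : R) : tangentAdd s a b = tangentAdd s b a := by
  unfold tangentAdd
  ring_nf

@[simp]
theorem tangentAdd_zero (a : R) : tangentAdd s a 0 = a := by
  simp [tangentAdd]

@[simp]
theorem zero_tangentAdd (a : R) : tangentAdd s 0 a = a := by
  simp [tangentAdd]

@[simp]
theorem tangentAdd_neg_self (a : R) : tangentAdd s a (-a) = 0 := by
  simp [tangentAdd]

variable {s}

theorem tangentAdd_tangentAdd (hs : s ∈ Ideal.jacobson ⊥) (a b c : R) :
    tangentAdd s (tangentAdd s a b) c =
      (a + b + c + s * a * b * c) * Ring.inverse (1 + s * (a * b + b * c + c * a)) := by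
  set v := Ring.inverse (1 + s * a * b)
  have hab : IsUnit (1 + s * a * b) := by
    simpa only [mul_assoc] using isUnit_one_add_mul_of_mem_jacobson_bot hs (a * b)
  have hv : (1 + s * a * b) * v = 1 := Ring.mul_inverse_cancel _ hab
  have hnum : (a + b) * v + c = (a + b + c + s * a * b * c) * v := by
    linear_combination (-c) * hv
  have hden : 1 + s * ((a + b) * v) * c = (1 + s * (a * b + b * c + c * a)) * v := by
    linear_combination (-1 : R) * hv
  rw [tangentAdd, tangentAdd, hnum, hden,
    Ring.mul_mul_inverse_mul_cancel_right hab.ringInverse]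

theorem tangentAdd_assoc (hs : s ∈ Ideal.jacobson ⊥) (a b c : R) :
    tangentAdd s (tangentAdd s a b) c = tangentAdd s a (tangentAdd s b c) := by
  rw [tangentAdd_comm s a (tangentAdd s b c), tangentAdd_tangentAdd hs, tangentAdd_tangentAdd hs]
  ring_nf

end TangentAdd

/-- For any commutative ring `R` and any nilpotent element `s ∈ R`, the operation
`a ∘ b := (a + b) * (1 + s * a * b)⁻¹` makes `R` into an abelian group with identity `0`
and inverse `a ↦ -a`. -/
theorem nilpotent_tangent_addition_abelian_group
    (R : Type*) [CommRing R] (s : R) (hs : IsNilpotent s)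
    (op : R → R → R) (hop : ∀ a b : R, op a b = (a + b) * Ring.inverse (1 + s * a * b)) :
    (∀ a b : R, op a b = op b a) ∧
    (∀ a b c : R, op (op a b) c = op a (op b c)) ∧
    (∀ a : R, op a 0 = a) ∧ (∀ a : R, op 0 a = a) ∧
    (∀ a : R, op a (-a) = 0) := by
  obtain rfl : op = tangentAdd s := funext₂ hop
  exact ⟨tangentAdd_comm s, tangentAdd_assoc hs.mem_jacobson_bot, tangentAdd_zero s,
    zero_tangentAdd s, tangentAdd_neg_self s⟩
end

section
/- Let $\mathbbm{k}$ be a field, $m \geq 1$, $K = \mathbbm{k}[\sigma]/(\sigma^m)$, $L = \mathbbm{k}[\varepsilon]/(\varepsilon^{2m})$ with $\sigma = \varepsilon^2$, and fix $1 \leq j \leq m-1$. For $\gamma, \gamma' \in L$ of the form $\gamma = \sum_{i=0}^{m-j-1}\alpha_i \varepsilon^{2i}$, if the pairs $(1+\varepsilon\gamma \mid \varepsilon^{2(m-j)+1})$ and $(1+\varepsilon\gamma' \mid \varepsilon^{2(m-j)+1})$, viewed as $L$-linear maps $L \oplus L/(\varepsilon^{2j}) \to L$, differ by precomposition with a $K$-module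 automorphism of $K \oplus K/(\sigma^j)$ (extended $L$-linearly), then $\gamma = \gamma'$. -/
open Polynomial Finset

set_option synthInstance.maxHeartbeats 1000000
set_option maxHeartbeats 1000000

/-- The truncated polynomial ring `𝕜[X]/(X^n)`. -/
abbrev TruncPoly17 (𝕜 : Type*) [Field 𝕜] (n : ℕ) : Type _ :=
  Polynomial 𝕜 ⧸ Ideal.span {(X : Polynomial 𝕜) ^ n}

namespace Glue17

variable (𝕜 : Type*) [Field 𝕜]

noncomputable def mk (n : ℕ) : Polynomial 𝕜 →+* TruncPoly17 𝕜 n :=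
  Ideal.Quotient.mk (Ideal.span {(X : Polynomial 𝕜) ^ n})

lemma mk_apply (n : ℕ) (f : Polynomial 𝕜) :
    mk 𝕜 n f = Ideal.Quotient.mk (Ideal.span {(X : Polynomial 𝕜) ^ n}) f := rfl

lemma mk_surj (n : ℕ) : Function.Surjective (mk 𝕜 n) :=
  Ideal.Quotient.mk_surjective

lemma mk_eq_iff (n : ℕ) (f g : Polynomial 𝕜) :
    mk 𝕜 n f = mk 𝕜 n g ↔ (X : Polynomial 𝕜) ^ n ∣ f - g := by
  rw [mk_apply, mk_apply, Ideal.Quotient.mk_eq_mk_iff_sub_mem, Ideal.mem_span_singleton]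

lemma coeff_eq_of_mk_eq {n : ℕ} {f g : Polynomial 𝕜} (h : mk 𝕜 n f = mk 𝕜 n g)
    {k : ℕ} (hk : k < n) : f.coeff k = g.coeff k := by
  have h2 := Polynomial.X_pow_dvd_iff.mp ((mk_eq_iff 𝕜 n f g).mp h) k hk
  rwa [coeff_sub, sub_eq_zero] at h2

lemma algebraMap_eq (n : ℕ) (c : 𝕜) :
    algebraMap 𝕜 (TruncPoly17 𝕜 n) c = mk 𝕜 n (C c) := rfl

noncomputable def pzero (n : ℕ) (hn : n ≠ 0) : TruncPoly17 𝕜 n →+* 𝕜 :=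
  Ideal.Quotient.lift _ (evalRingHom 0) (by
    intro f hf
    obtain ⟨g, rfl⟩ := Ideal.mem_span_singleton.mp hf
    simp [zero_pow hn])

lemma pzero_mk (n : ℕ) (hn : n ≠ 0) (f : Polynomial 𝕜) :
    pzero 𝕜 n hn (mk 𝕜 n f) = f.eval 0 :=
  Ideal.Quotient.lift_mk _ _ _

lemma coeff_even (r : ℕ) (c : ℕ → 𝕜) {k : ℕ} (hk : k < r) :
    (∑ i ∈ range r, C (c i) * X ^ (2 * i)).coeff (2 * k) = c k := by
  rw [finset_sum_coeff, Finset.sum_eq_single k]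
  · rw [coeff_C_mul, coeff_X_pow, if_pos rfl, mul_one]
  · intro i hi hne
    rw [coeff_C_mul, coeff_X_pow, if_neg (by omega), mul_zero]
  · intro h; exact absurd (Finset.mem_range.mpr hk) h

lemma coeff_odd (r : ℕ) (c : ℕ → 𝕜) (k : ℕ) :
    (∑ i ∈ range r, C (c i) * X ^ (2 * i)).coeff (2 * k + 1) = 0 := by
  rw [finset_sum_coeff]
  apply Finset.sum_eq_zero
  intro i hi
  rw [coeff_C_mul, coeff_X_pow, if_neg (by omega), mul_zero]

lemma coeff_X_pow_mul_lt (f : Polynomial 𝕜) {a k : ℕ} (h : k < a) :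
    ((X : Polynomial 𝕜) ^ a * f).coeff k = 0 := by
  rw [mul_comm, coeff_mul_X_pow', if_neg (by omega)]

end Glue17

/-- Let `𝕜` be a field, `m ≥ 1`, `K = 𝕜[σ]/(σ^m)`, `L = 𝕜[ε]/(ε^{2m})` with `σ = ε²`,
and fix `1 ≤ j ≤ m-1`. For `γ, γ' ∈ L` of the form `∑_{i=0}^{m-j-1} αᵢ ε^{2i}`: if the
row vectors `(1 + εγ ∣ ε^{2(m-j)+1})` and `(1 + εγ' ∣ ε^{2(m-j)+1})`, viewed as
`L`-linear maps `L ⊕ L/(ε^{2j}) → L`, differ by precomposition with a `K`-module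
automorphism of `K ⊕ K/(σ^j)` (extended `L`-linearly, equivalently compared on the
`K`-points `K ⊕ K/(σ^j)`), then `γ = γ'`. -/
theorem gluing_normal_form_uniqueness
    (𝕜 : Type*) [Field 𝕜] (m j : ℕ) (hm : 1 ≤ m) (hj1 : 1 ≤ j) (hj2 : j ≤ m - 1)
    [Algebra (TruncPoly17 𝕜 m) (TruncPoly17 𝕜 (2 * m))]
    (hσ : algebraMap (TruncPoly17 𝕜 m) (TruncPoly17 𝕜 (2 * m))
        (Ideal.Quotient.mk (Ideal.span {(X : Polynomial 𝕜) ^ m}) X) =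
      (Ideal.Quotient.mk (Ideal.span {(X : Polynomial 𝕜) ^ (2 * m)}) X) ^ 2)
    (ε : TruncPoly17 𝕜 (2 * m))
    (hε : ε = Ideal.Quotient.mk (Ideal.span {(X : Polynomial 𝕜) ^ (2 * m)}) X)
    (σ : TruncPoly17 𝕜 m)
    (hσ' : σ = Ideal.Quotient.mk (Ideal.span {(X : Polynomial 𝕜) ^ m}) X)
    (γ γ' : TruncPoly17 𝕜 (2 * m))
    (hγ : ∃ a : ℕ → 𝕜, γ = ∑ i ∈ range (m - j),
      algebraMap 𝕜 (TruncPoly17 𝕜 (2 * m)) (a i) * ε ^ (2 * i))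
    (hγ' : ∃ a : ℕ → 𝕜, γ' = ∑ i ∈ range (m - j),
      algebraMap 𝕜 (TruncPoly17 𝕜 (2 * m)) (a i) * ε ^ (2 * i))
    (Θ : TruncPoly17 𝕜 (2 * m) → TruncPoly17 𝕜 m → TruncPoly17 𝕜 m → TruncPoly17 𝕜 (2 * m))
    (hΘ : ∀ g x y, Θ g x y =
      (1 + ε * g) * algebraMap (TruncPoly17 𝕜 m) (TruncPoly17 𝕜 (2 * m)) x +
        ε ^ (2 * (m - j) + 1) * algebraMap (TruncPoly17 𝕜 m) (TruncPoly17 𝕜 (2 * m)) y)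
    (hequiv : ∃ ψ : ((TruncPoly17 𝕜 m) ×
        ((TruncPoly17 𝕜 m) ⧸ (Ideal.span {σ ^ j} : Ideal (TruncPoly17 𝕜 m)))) ≃ₗ[TruncPoly17 𝕜 m]
        ((TruncPoly17 𝕜 m) ×
        ((TruncPoly17 𝕜 m) ⧸ (Ideal.span {σ ^ j} : Ideal (TruncPoly17 𝕜 m)))),
      ∀ x y x' y' : TruncPoly17 𝕜 m,
        ψ (x, Submodule.Quotient.mk y) = (x', Submodule.Quotient.mk y') →
          Θ γ' x y = Θ γ x' y') :
    γ = γ' := by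
  classical
  obtain ⟨α, hPγ⟩ := hγ
  obtain ⟨α', hPγ'⟩ := hγ'
  obtain ⟨ψ, hψ⟩ := hequiv
  have hn0 : (2 * m) ≠ 0 := by omega
  set φ0 : 𝕜 →+* TruncPoly17 𝕜 (2 * m) :=
    (algebraMap (TruncPoly17 𝕜 m) (TruncPoly17 𝕜 (2 * m))).comp
      ((Glue17.mk 𝕜 m).comp (C : 𝕜 →+* Polynomial 𝕜)) with hφ0
  set π0 : TruncPoly17 𝕜 (2 * m) →+* 𝕜 := Glue17.pzero 𝕜 (2 * m) hn0 with hπ0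
  have τinj : Function.Injective (π0.comp φ0) := (π0.comp φ0).injective
  have π0_mk : ∀ f : Polynomial 𝕜, π0 (Glue17.mk 𝕜 (2 * m) f) = f.eval 0 :=
    fun f => Glue17.pzero_mk 𝕜 (2 * m) hn0 f
  have hX : Glue17.mk 𝕜 (2 * m) X = ε := by rw [hε]; rfl
  have π0ε : π0 ε = 0 := by rw [← hX, π0_mk, eval_X]
  -- the main equation
  obtain ⟨b, hb⟩ := Submodule.Quotient.mk_surjective _ (ψ (1, Submodule.Quotient.mk 0)).2
  have E0 := hψ 1 0 (ψ (1, Submodule.Quotient.mk 0)).1 b (by rw [hb])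
  set a0 := (ψ (1, Submodule.Quotient.mk 0)).1 with ha0
  rw [hΘ, hΘ] at E0
  simp only [map_one, mul_one, map_zero, mul_zero, add_zero] at E0
  -- E0 : 1 + ε * γ' = (1 + ε * γ) * algebraMap _ _ a0 + ε ^ (2*(m-j)+1) * algebraMap _ _ b
  -- polynomial representation of a0
  obtain ⟨q, hq⟩ := Glue17.mk_surj 𝕜 m a0
  set t : ℕ → 𝕜 := fun i => q.coeff i with htdef
  have hφX : algebraMap (TruncPoly17 𝕜 m) (TruncPoly17 𝕜 (2 * m)) (Glue17.mk 𝕜 m X) = ε ^ 2 := by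
    rw [Glue17.mk_apply, hσ, hε]
  have hq2 : Glue17.mk 𝕜 m (∑ i ∈ range m, C (t i) * X ^ i) = a0 := by
    rw [← hq, Glue17.mk_eq_iff, Polynomial.X_pow_dvd_iff]
    intro d hd
    rw [coeff_sub, finset_sum_coeff, sub_eq_zero, Finset.sum_eq_single d]
    · rw [coeff_C_mul, coeff_X_pow, if_pos rfl, mul_one]
    · intro i hi hne
      rw [coeff_C_mul, coeff_X_pow, if_neg (by omega), mul_zero]
    · intro h; exact absurd (Finset.mem_range.mpr hd) h
  have hA : algebraMap (TruncPoly17 𝕜 m) (TruncPoly17 𝕜 (2 * m)) a0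
      = ∑ i ∈ range m, φ0 (t i) * ε ^ (2 * i) := by
    rw [← hq2]
    simp only [map_sum, map_mul, map_pow, hφX, ← pow_mul]
    apply Finset.sum_congr rfl
    intro i _
    rfl
  have Asplit : ∀ s : ℕ, s + 1 ≤ m → t 0 = 1 → (∀ i, 1 ≤ i → i ≤ s → t i = 0) →
      algebraMap (TruncPoly17 𝕜 m) (TruncPoly17 𝕜 (2 * m)) a0
        = 1 + ε ^ (2 * (s + 1)) * ∑ i ∈ Finset.Ico (s + 1) m, φ0 (t i) * ε ^ (2 * (i - (s + 1))) := by
    intro s hsm ht0 hts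
    rw [hA, Finset.range_eq_Ico, ← Finset.sum_Ico_consecutive _ (Nat.zero_le (s + 1)) hsm]
    congr 1
    · rw [← Finset.range_eq_Ico, Finset.sum_eq_single 0]
      · simp [ht0]
      · intro i hi hne
        have hi' := Finset.mem_range.mp hi
        rw [hts i (by omega) (by omega)]
        simp
      · intro h; simp at h
    · rw [Finset.mul_sum]
      apply Finset.sum_congr rfl
      intro i hi
      have hi' := (Finset.mem_Ico.mp hi).1
      rw [show 2 * i = 2 * (s + 1) + 2 * (i - (s + 1)) from by omega, pow_add]
      ring
  have π0u : ∀ s : ℕ, s + 1 < m →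
      π0 (∑ i ∈ Finset.Ico (s + 1) m, φ0 (t i) * ε ^ (2 * (i - (s + 1)))) = (π0.comp φ0) (t (s + 1)) := by
    intro s hsm
    rw [map_sum, Finset.sum_eq_single (s + 1)]
    · rw [map_mul, map_pow, π0ε, Nat.sub_self, Nat.mul_zero, pow_zero, mul_one]
      rfl
    · intro i hi hne
      have hi' := (Finset.mem_Ico.mp hi).1
      rw [map_mul, map_pow, π0ε, zero_pow (by omega : 2 * (i - (s + 1)) ≠ 0), mul_zero]
    · intro h; exact absurd (Finset.mem_Ico.mpr ⟨le_refl _, hsm⟩) h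
  have ht0 : t 0 = 1 := by
    apply τinj
    have h1 : π0 (1 + ε * γ') = 1 := by
      rw [map_add, map_one, map_mul, π0ε, zero_mul, add_zero]
    have h2 : π0 ((1 + ε * γ) * algebraMap (TruncPoly17 𝕜 m) (TruncPoly17 𝕜 (2 * m)) a0
        + ε ^ (2 * (m - j) + 1) * algebraMap (TruncPoly17 𝕜 m) (TruncPoly17 𝕜 (2 * m)) b)
        = (π0.comp φ0) (t 0) := by
      rw [map_add, map_mul, map_mul, map_pow, π0ε,
        zero_pow (by omega : 2 * (m - j) + 1 ≠ 0), zero_mul, add_zero,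
        map_add, map_one, map_mul, π0ε, zero_mul, add_zero, one_mul, hA, map_sum,
        Finset.sum_eq_single_of_mem 0 (Finset.mem_range.mpr (by omega : 0 < m))]
      · rw [map_mul, map_pow, π0ε, Nat.mul_zero, pow_zero, mul_one]
        rfl
      · intro i hi hne
        rw [map_mul, map_pow, π0ε, zero_pow (by omega : 2 * i ≠ 0), mul_zero]
    rw [map_one, ← h2, ← E0]
    exact h1
  -- polynomial lifts of γ, γ'
  set Pγ : Polynomial 𝕜 := ∑ i ∈ range (m - j), C (α i) * X ^ (2 * i) with hPγdef
  set Pγ' : Polynomial 𝕜 := ∑ i ∈ range (m - j), C (α' i) * X ^ (2 * i) with hPγ'def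
  have hPmk : ∀ c : ℕ → 𝕜, Glue17.mk 𝕜 (2 * m) (∑ i ∈ range (m - j), C (c i) * X ^ (2 * i))
      = ∑ i ∈ range (m - j), algebraMap 𝕜 (TruncPoly17 𝕜 (2 * m)) (c i) * ε ^ (2 * i) := by
    intro c
    rw [map_sum]
    apply Finset.sum_congr rfl
    intro i _
    rw [map_mul, map_pow, hX, Glue17.algebraMap_eq]
  have hPγ2 : γ = Glue17.mk 𝕜 (2 * m) Pγ := by rw [hPγdef, hPmk, hPγ]
  have hPγ'2 : γ' = Glue17.mk 𝕜 (2 * m) Pγ' := by rw [hPγ'def, hPmk, hPγ']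
  -- the inductive vanishing of the coefficients of a0
  have key : ∀ s : ℕ, s ≤ m - j → ∀ i, 1 ≤ i → i ≤ s → t i = 0 := by
    intro s
    induction s with
    | zero => intro _ i h1 h2; omega
    | succ s IH =>
      intro hs i h1 h2
      have prev : ∀ i', 1 ≤ i' → i' ≤ s → t i' = 0 := IH (by omega)
      by_cases hc : i ≤ s
      · exact prev i h1 hc
      · have hi : i = s + 1 := by omega
        subst hi
        have hsm1 : s + 1 ≤ m := by omega
        have hsm2 : s + 1 < m := by omega
        have hAs := Asplit s hsm1 ht0 prev
        have hπu := π0u s hsm2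
        set u := ∑ i' ∈ Finset.Ico (s + 1) m, φ0 (t i') * ε ^ (2 * (i' - (s + 1))) with hudef
        have E1 := E0
        rw [hAs] at E1
        have heq : ε ^ (2 * (s + 1)) * u
            = ε * ((γ' - γ) - ε ^ (2 * (s + 1)) * (γ * u)
              - ε ^ (2 * (m - j)) * algebraMap (TruncPoly17 𝕜 m) (TruncPoly17 𝕜 (2 * m)) b) := by
          linear_combination -E1
        obtain ⟨U, hU⟩ := Glue17.mk_surj 𝕜 (2 * m) u
        obtain ⟨G, hG⟩ := Glue17.mk_surj 𝕜 (2 * m) (γ * u)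
        obtain ⟨Bp, hBp⟩ := Glue17.mk_surj 𝕜 (2 * m)
          (algebraMap (TruncPoly17 𝕜 m) (TruncPoly17 𝕜 (2 * m)) b)
        have hlift : Glue17.mk 𝕜 (2 * m) (X ^ (2 * (s + 1)) * U)
            = Glue17.mk 𝕜 (2 * m)
              (X * ((Pγ' - Pγ) - X ^ (2 * (s + 1)) * G - X ^ (2 * (m - j)) * Bp)) := by
          rw [map_mul, map_pow, hX, hU]
          rw [map_mul, map_sub, map_sub, map_sub, map_mul, map_mul, map_pow, map_pow, hX,
            hG, hBp, ← hPγ2, ← hPγ'2]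
          exact heq
        have hcoeff := Glue17.coeff_eq_of_mk_eq 𝕜 hlift (k := 2 * (s + 1)) (by omega)
        have hL : ((X : Polynomial 𝕜) ^ (2 * (s + 1)) * U).coeff (2 * (s + 1)) = U.coeff 0 := by
          have h := Polynomial.coeff_X_pow_mul U (2 * (s + 1)) 0
          simpa using h
        have hR : ((X : Polynomial 𝕜) * ((Pγ' - Pγ) - X ^ (2 * (s + 1)) * G
            - X ^ (2 * (m - j)) * Bp)).coeff (2 * (s + 1)) = 0 := by
          rw [show 2 * (s + 1) = (2 * s + 1) + 1 from by omega, Polynomial.coeff_X_mul]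
          rw [coeff_sub, coeff_sub,
            Glue17.coeff_X_pow_mul_lt 𝕜 G (show 2 * s + 1 < 2 * s + 1 + 1 by omega),
            Glue17.coeff_X_pow_mul_lt 𝕜 Bp (by omega : 2 * s + 1 < 2 * (m - j)),
            sub_zero, sub_zero, coeff_sub, hPγdef, hPγ'def,
            Glue17.coeff_odd, Glue17.coeff_odd, sub_zero]
        have hU0 : U.coeff 0 = 0 := by rw [← hL, hcoeff, hR]
        have hπ0u : π0 u = 0 := by
          rw [← hU, π0_mk, ← Polynomial.coeff_zero_eq_eval_zero, hU0]
        apply τinj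
        rw [map_zero, ← hπu, hπ0u]
  -- conclusion
  have htr : ∀ i, 1 ≤ i → i ≤ m - j → t i = 0 := key (m - j) le_rfl
  have hAr := Asplit (m - j) (by omega) ht0 htr
  set u := ∑ i ∈ Finset.Ico (m - j + 1) m, φ0 (t i) * ε ^ (2 * (i - (m - j + 1))) with hudef
  have E1 := E0
  rw [hAr] at E1
  have hv : ε * γ' - ε * γ = ε ^ (2 * (m - j) + 1)
      * (ε * ((1 + ε * γ) * u) + algebraMap (TruncPoly17 𝕜 m) (TruncPoly17 𝕜 (2 * m)) b) := by
    linear_combination E1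
  obtain ⟨V, hV⟩ := Glue17.mk_surj 𝕜 (2 * m)
    (ε * ((1 + ε * γ) * u) + algebraMap (TruncPoly17 𝕜 m) (TruncPoly17 𝕜 (2 * m)) b)
  have hfin : Glue17.mk 𝕜 (2 * m) (X * Pγ' - X * Pγ)
      = Glue17.mk 𝕜 (2 * m) (X ^ (2 * (m - j) + 1) * V) := by
    rw [map_sub, map_mul, map_mul, map_mul, map_pow, hX, hV, ← hPγ2, ← hPγ'2]
    exact hv
  have hcoef : ∀ i, i < m - j → α' i = α i := by
    intro i hi
    have h1 := Glue17.coeff_eq_of_mk_eq 𝕜 hfin (k := 2 * i + 1) (by omega)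
    rw [coeff_sub, Polynomial.coeff_X_mul, Polynomial.coeff_X_mul,
      Glue17.coeff_X_pow_mul_lt 𝕜 V (by omega : 2 * i + 1 < 2 * (m - j) + 1),
      hPγdef, hPγ'def, Glue17.coeff_even 𝕜 (m - j) α' hi, Glue17.coeff_even 𝕜 (m - j) α hi]
      at h1
    exact sub_eq_zero.mp h1
  rw [hPγ, hPγ']
  apply Finset.sum_congr rfl
  intro i hi
  rw [hcoef i (Finset.mem_range.mp hi)]
end
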